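/- Let q ≥ 1 be an integer, χ a Dirichlet character modulo q, and a an integer. Then Σ_{h=1}^{q} conj(χ)(h) · e_q(a h²) = Σ_{ξ} τ_a(ξ), where the sum on the right-hand side runs over all Dirichlet characters ξ modulo q satisfying ξ² = conj(χ). -/

import Mathlib

open scoped Classical

/-- The Gauss sum `τ_a(ξ) = ∑_{h=1}^{q} ξ(h) e_q(ah)`. -/
noncomputable def gaussTau (q : ℕ) (ξ : DirichletCharacter ℂ q) (a : ℤ) : ℂ :=
  ∑ h ∈ Finset.Icc 1 q,
    ξ (h : ZMod q) * Complex.exp (2 * (Real.pi : ℂ) * Complex.I * ((a : ℂ) * (h : ℂ)) / (q : ℂ))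

/-!
Grouping the terms by the value `m = h²` reduces the theorem to the identity
`∑_{y² = m} ψ(y) = ∑_{ξ² = ψ} ξ(m)` for every `m : ZMod q`. Multiplied by `φ(q)`, both sides
equal `∑_{ξ, y} ξ(m) · (ψ · (ξ²)⁻¹)(y)`: summing over `ξ` first, orthogonality of the characters
turns `∑_ξ (ξ²)⁻¹(y) ξ(m)` into `φ(q)` times the indicator of `y² = m` (for units `y`; otherwise
`ψ(y) = 0`); summing over `y` first, `∑_y (ψ · (ξ²)⁻¹)(y)` is `φ(q)` times the indicator of
`ξ² = ψ`.
-/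

open Finset

theorem MulChar.sum_apply_eq_ite {M R : Type*} [CommMonoid M] [Fintype M] [DecidableEq M]
    [CommRing R] [IsDomain R] (χ : MulChar M R) :
    ∑ a, χ a = if χ = 1 then (Fintype.card Mˣ : R) else 0 := by
  split_ifs with h
  · rw [h, MulChar.sum_one_eq_card_units]
  · exact MulChar.sum_eq_zero_of_ne_one h

theorem ZMod.sum_Icc_one_natCast {M : Type*} [AddCommMonoid M] (q : ℕ) [NeZero q]
    (f : ZMod q → M) : ∑ h ∈ Icc 1 q, f h = ∑ x, f x := by
  have hinj : Set.InjOn (Nat.cast : ℕ → ZMod q) (Icc 1 q) := by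
    intro h hh h' hh' heq
    simp only [coe_Icc, Set.mem_Icc] at hh hh'
    refine ((ZMod.natCast_eq_natCast_iff _ _ _).mp heq).eq_of_abs_lt ?_
    exact abs_sub_lt_iff.mpr ⟨by omega, by omega⟩
  have himage : (Icc 1 q).image (Nat.cast : ℕ → ZMod q) = univ :=
    eq_univ_of_card _ (by rw [card_image_of_injOn hinj, Nat.card_Icc, ZMod.card]; omega)
  rw [← himage, sum_image hinj]

namespace DirichletCharacter

variable {R : Type*} [CommRing R] [IsDomain R] {n : ℕ} [NeZero n]
  [HasEnoughRootsOfUnity R (Monoid.exponent (ZMod n)ˣ)]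

theorem sum_inv_pow_apply_mul_apply {y : ZMod n} (hy : IsUnit y) (k : ℕ) (m : ZMod n) :
    ∑ ξ : DirichletCharacter R n, (ξ ^ k)⁻¹ y * ξ m = if y ^ k = m then (n.totient : R) else 0 := by
  rw [← sum_char_inv_mul_char_eq R (hy.pow k) m]
  refine sum_congr rfl fun ξ _ => ?_
  obtain ⟨u, rfl⟩ := hy
  rw [← Units.val_pow_eq_pow_val, ZMod.inv_coe_unit, ← inv_pow, MulChar.pow_apply_coe,
    MulChar.inv_apply, Ring.inverse_unit, ← map_pow, ← Units.val_pow_eq_pow_val, inv_pow]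

variable [CharZero R]

theorem sum_filter_pow_eq_sum_filter_pow (k : ℕ) (ψ : DirichletCharacter R n) (m : ZMod n) :
    ∑ y ∈ univ.filter (fun y : ZMod n => y ^ k = m), ψ y
      = ∑ ξ ∈ univ.filter (fun ξ : DirichletCharacter R n => ξ ^ k = ψ), ξ m := by
  have hφ : (n.totient : R) ≠ 0 := by exact_mod_cast (Nat.totient_pos.mpr (NeZero.pos n)).ne'
  refine mul_left_cancel₀ hφ ?_
  calc (n.totient : R) * ∑ y ∈ univ.filter (fun y : ZMod n => y ^ k = m), ψ y
      = ∑ y, ψ y * if y ^ k = m then (n.totient : R) else 0 := by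
        rw [mul_sum, sum_filter]
        exact sum_congr rfl fun y _ => by split_ifs <;> ring
    _ = ∑ y, ∑ ξ : DirichletCharacter R n, ξ m * (ψ * (ξ ^ k)⁻¹) y := by
        refine sum_congr rfl fun y _ => ?_
        by_cases hy : IsUnit y
        · rw [← sum_inv_pow_apply_mul_apply hy, mul_sum]
          exact sum_congr rfl fun ξ _ => by rw [MulChar.mul_apply]; ring
        · simp [MulChar.mul_apply, ψ.map_nonunit hy]
    _ = ∑ ξ : DirichletCharacter R n, ξ m * if ξ ^ k = ψ then (n.totient : R) else 0 := by
        rw [sum_comm]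
        refine sum_congr rfl fun ξ _ => ?_
        rw [← mul_sum, MulChar.sum_apply_eq_ite, ZMod.card_units_eq_totient]
        simp_rw [mul_inv_eq_one, eq_comm (a := ψ)]
    _ = (n.totient : R) * ∑ ξ ∈ univ.filter (fun ξ : DirichletCharacter R n => ξ ^ k = ψ), ξ m := by
        rw [mul_sum, sum_filter]
        exact sum_congr rfl fun ξ _ => by split_ifs <;> ring

theorem sum_mul_apply_pow_eq_sum_filter_pow (k : ℕ) (ψ : DirichletCharacter R n)
    (e : ZMod n → R) :
    ∑ x, ψ x * e (x ^ k)
      = ∑ ξ ∈ univ.filter (fun ξ : DirichletCharacter R n => ξ ^ k = ψ), ∑ x, ξ x * e x := by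
  rw [sum_comm, ← sum_fiberwise univ (· ^ k)]
  refine sum_congr rfl fun x _ => ?_
  rw [← sum_mul, ← sum_filter_pow_eq_sum_filter_pow, sum_mul]
  exact sum_congr rfl fun y hy => by rw [(mem_filter.mp hy).2]

end DirichletCharacter

/-- For q ≥ 1, a Dirichlet character χ mod q and a ∈ ℤ,
`∑_{h=1}^{q} conj(χ)(h) e_q(a h²) = ∑_{ξ² = conj(χ)} τ_a(ξ)`,
the sum being over all Dirichlet characters ξ mod q with ξ² = conj(χ). -/
theorem quadratic_char_sum_eq_sum_gauss (q : ℕ) (hq : 1 ≤ q)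
    (χ : DirichletCharacter ℂ q) (a : ℤ) :
    (∑ h ∈ Finset.Icc 1 q,
        (starRingEnd ℂ) (χ (h : ZMod q)) *
          Complex.exp (2 * (Real.pi : ℂ) * Complex.I * ((a : ℂ) * (h : ℂ) ^ 2) / (q : ℂ)))
      = ∑ ξ ∈ Finset.univ.filter
          (fun ξ : DirichletCharacter ℂ q => ξ ^ 2 = χ.ringHomComp (starRingEnd ℂ)),
          gaussTau q ξ a := by
  have : NeZero q := ⟨by omega⟩
  have : NeZero (Monoid.exponent (ZMod q)ˣ) := ⟨Monoid.exponent_ne_zero_of_finite⟩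
  let e : ZMod q → ℂ := fun x => ZMod.stdAddChar ((a : ZMod q) * x)
  have he (h k : ℕ) : Complex.exp (2 * Real.pi * Complex.I * (a * (h : ℂ) ^ k) / q)
      = e ((h : ZMod q) ^ k) := by
    simpa using (ZMod.stdAddChar_coe (N := q) (a * h ^ k)).symm
  calc _ = ∑ x : ZMod q, χ.ringHomComp (starRingEnd ℂ) x * e (x ^ 2) := by
        rw [← ZMod.sum_Icc_one_natCast]
        exact sum_congr rfl fun h _ => by rw [he]; rfl
    _ = ∑ ξ ∈ univ.filter (fun ξ : DirichletCharacter ℂ q => ξ ^ 2 = χ.ringHomComp (starRingEnd ℂ)),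
          ∑ x, ξ x * e x :=
        DirichletCharacter.sum_mul_apply_pow_eq_sum_filter_pow 2 _ e
    _ = _ := by
        -- the two filters differ only in their `Decidable` instances
        refine sum_congr (by congr) fun ξ _ => ?_
        rw [gaussTau, ← ZMod.sum_Icc_one_natCast]
        exact sum_congr rfl fun h _ => by simpa using congrArg (ξ h * ·) (he h 1).symm
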